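/- Let (H,α) be a monoidal Hom-Hopf algebra over a commutative ring k and let (M,μ) be a left-covariant (H,α)-Hom-bimodule with left coaction ρ(m)=m₍₋₁₎⊗m₍₀₎, and set P_L(m)=S(m₍₋₁₎)·m₍₀₎. Then for all h∈H and m∈M: P_L(h·m)=ε(h)μ(P_L(m)) and P_L(m·h)=(S(h₁)·μ⁻¹(P_L(m)))·α(h₂) (i.e. P_L(m·h) equals the right adjoint Hom-action of h on P_L(m)). -/

import Mathlib

open TensorProduct

noncomputable def tmul2 {k A B C D E F : Type*} [CommRing k]
    [AddCommGroup A] [AddCommGroup B] [AddCommGroup C] [AddCommGroup D]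
    [AddCommGroup E] [AddCommGroup F]
    [Module k A] [Module k B] [Module k C] [Module k D] [Module k E] [Module k F]
    (f : A →ₗ[k] C →ₗ[k] E) (g : B →ₗ[k] D →ₗ[k] F) :
    (A ⊗[k] B) →ₗ[k] (C ⊗[k] D) →ₗ[k] (E ⊗[k] F) :=
  TensorProduct.curry
    ((TensorProduct.map (TensorProduct.lift f) (TensorProduct.lift g)) ∘ₗ
      (TensorProduct.tensorTensorTensorComm k A B C D).toLinearMap)

/-- A monoidal Hom-Hopf algebra over a commutative ring `k`. -/
structure MonHomHopf (k H : Type*) [CommRing k] [AddCommGroup H] [Module k H] where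
  α : H ≃ₗ[k] H
  mul : H →ₗ[k] H →ₗ[k] H
  one : H
  comul : H →ₗ[k] H ⊗[k] H
  counit : H →ₗ[k] k
  S : H →ₗ[k] H
  alpha_mul : ∀ g h, α (mul g h) = mul (α g) (α h)
  alpha_one : α one = one
  hom_assoc : ∀ g h l, mul (α g) (mul h l) = mul (mul g h) (α l)
  mul_one' : ∀ h, mul h one = α h
  one_mul' : ∀ h, mul one h = α h
  comul_alpha : ∀ h, comul (α h)
    = TensorProduct.map α.toLinearMap α.toLinearMap (comul h)
  counit_alpha : ∀ h, counit (α h) = counit h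
  hom_coassoc : ∀ h,
    (TensorProduct.assoc k H H H) ((TensorProduct.map comul α.symm.toLinearMap) (comul h))
      = (TensorProduct.map α.symm.toLinearMap comul) (comul h)
  counit_comul_left : ∀ h,
    (TensorProduct.lid k H) ((TensorProduct.map counit LinearMap.id) (comul h)) = α.symm h
  counit_comul_right : ∀ h,
    (TensorProduct.rid k H) ((TensorProduct.map LinearMap.id counit) (comul h)) = α.symm h
  comul_mul : ∀ g h, comul (mul g h) = tmul2 mul mul (comul g) (comul h)
  comul_one : comul one = one ⊗ₜ[k] one
  counit_mul : ∀ g h, counit (mul g h) = counit g * counit h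
  counit_one : counit one = 1
  antipode_left : ∀ h,
    (TensorProduct.lift mul) ((TensorProduct.map S LinearMap.id) (comul h)) = counit h • one
  antipode_right : ∀ h,
    (TensorProduct.lift mul) ((TensorProduct.map LinearMap.id S) (comul h)) = counit h • one
  S_alpha : ∀ h, S (α h) = α (S h)

/-- A left-covariant `(H,α)`-Hom-bimodule. -/
structure LeftCovBimod {k H : Type*} [CommRing k] [AddCommGroup H] [Module k H]
    (A : MonHomHopf k H) (M : Type*) [AddCommGroup M] [Module k M] where
  μ : M ≃ₗ[k] M
  lact : H →ₗ[k] M →ₗ[k] M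
  ract : M →ₗ[k] H →ₗ[k] M
  lact_assoc : ∀ g h m, lact (A.α g) (lact h m) = lact (A.mul g h) (μ m)
  lact_one : ∀ m, lact A.one m = μ m
  mu_lact : ∀ h m, μ (lact h m) = lact (A.α h) (μ m)
  ract_assoc : ∀ m g h, ract (μ m) (A.mul g h) = ract (ract m g) (A.α h)
  ract_one : ∀ m, ract m A.one = μ m
  mu_ract : ∀ m h, μ (ract m h) = ract (μ m) (A.α h)
  bimod : ∀ h m g, ract (lact h m) (A.α g) = lact (A.α h) (ract m g)
  rho : M →ₗ[k] H ⊗[k] M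
  rho_coassoc : ∀ m,
    (TensorProduct.map (LinearMap.id : H →ₗ[k] H) rho) (rho m)
      = (TensorProduct.assoc k H H M)
          ((TensorProduct.map
              ((TensorProduct.map A.α.toLinearMap (LinearMap.id : H →ₗ[k] H)) ∘ₗ A.comul)
              μ.symm.toLinearMap) (rho m))
  rho_counit : ∀ m,
    (TensorProduct.lid k M) ((TensorProduct.map A.counit (LinearMap.id : M →ₗ[k] M)) (rho m))
      = μ.symm m
  rho_mu : ∀ m, rho (μ m) = TensorProduct.map A.α.toLinearMap μ.toLinearMap (rho m)
  rho_cov : ∀ h g m,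
    rho (ract (lact h m) (A.α g))
      = tmul2 A.mul lact (A.comul (A.α h)) (tmul2 A.mul ract (rho m) (A.comul g))

/-- The projection `P_L(m) = S(m₍₋₁₎) · m₍₀₎`. -/
noncomputable def LeftCovBimod.PL {k H : Type*} [CommRing k] [AddCommGroup H] [Module k H]
    {A : MonHomHopf k H} {M : Type*} [AddCommGroup M] [Module k M]
    (B : LeftCovBimod A M) : M →ₗ[k] M :=
  (TensorProduct.lift (B.lact ∘ₗ A.S)) ∘ₗ B.rho

/-- The right adjoint Hom-action of `H` on a left-covariant Hom-bimodule:
`x ◁ h = (S(h₁) · μ⁻¹(x)) · α(h₂)`. -/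
noncomputable def LeftCovBimod.adRM {k H : Type*} [CommRing k] [AddCommGroup H] [Module k H]
    {A : MonHomHopf k H} {M : Type*} [AddCommGroup M] [Module k M]
    (B : LeftCovBimod A M) (x : M) : H →ₗ[k] M :=
  (TensorProduct.lift
    ((B.ract.comp ((B.lact.flip (B.μ.symm x)).comp A.S)).compl₂ A.α.toLinearMap)) ∘ₗ A.comul

/-!
Covariance with `g = 1`, resp. `h = 1`, gives `ρ(h·m) = h₁m₋₁ ⊗ h₂·m₀` and
`ρ(m·h) = m₋₁h₁ ⊗ m₀·h₂`. As the antipode is anti-multiplicative,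
`P_L(h·m) = (S(m₋₁)S(h₁))·(h₂·m₀)`, and Hom-associativity of the action brings `S(h₁)h₂ = ε(h)1`
together; likewise `P_L(m·h) = (S(h₁)S(m₋₁))·(m₀·h₂)` is rearranged by the bimodule axiom into
`(S(h₁)·μ⁻¹(S(m₋₁)·m₀))·α(h₂)`.

Anti-multiplicativity of `S` is the convolution argument on maps `H ⊗ H → H`: `S ∘ m` is a left and
`a ⊗ b ↦ S(b)S(a)` a right convolution inverse of the multiplication `m`, and convolution is
associative on maps commuting with the structure maps `α`, because `H ⊗ H` is again a
Hom-coalgebra.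
-/

section HomCoalgebra

variable {k C D : Type*} [CommRing k] [AddCommGroup C] [Module k C] [AddCommGroup D] [Module k D]

def IsHomCoassoc (αC : C ≃ₗ[k] C) (δ : C →ₗ[k] C ⊗[k] C) : Prop :=
  (TensorProduct.assoc k C C C).toLinearMap ∘ₗ map δ αC.symm.toLinearMap ∘ₗ δ
    = map αC.symm.toLinearMap δ ∘ₗ δ

def IsHomCounit (αC : C ≃ₗ[k] C) (δ : C →ₗ[k] C ⊗[k] C) (ε : C →ₗ[k] k) : Prop :=
  (TensorProduct.rid k C).toLinearMap ∘ₗ map LinearMap.id ε ∘ₗ δ = αC.symm.toLinearMap ∧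
    (TensorProduct.lid k C).toLinearMap ∘ₗ map ε LinearMap.id ∘ₗ δ = αC.symm.toLinearMap

lemma assoc_comp_map_tensorTensorTensorComm :
    (TensorProduct.assoc k (C ⊗[k] D) (C ⊗[k] D) (C ⊗[k] D)).toLinearMap
        ∘ₗ map (tensorTensorTensorComm k C C D D).toLinearMap LinearMap.id
        ∘ₗ (tensorTensorTensorComm k (C ⊗[k] C) C (D ⊗[k] D) D).toLinearMap
      = map LinearMap.id (tensorTensorTensorComm k C C D D).toLinearMap
        ∘ₗ (tensorTensorTensorComm k C (C ⊗[k] C) D (D ⊗[k] D)).toLinearMap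
        ∘ₗ map (TensorProduct.assoc k C C C).toLinearMap
          (TensorProduct.assoc k D D D).toLinearMap := by
  ext; rfl

lemma IsHomCoassoc.tensor {αC : C ≃ₗ[k] C} {δC : C →ₗ[k] C ⊗[k] C}
    {αD : D ≃ₗ[k] D} {δD : D →ₗ[k] D ⊗[k] D} (hC : IsHomCoassoc αC δC) (hD : IsHomCoassoc αD δD) :
    IsHomCoassoc (TensorProduct.congr αC αD)
      ((tensorTensorTensorComm k C C D D).toLinearMap ∘ₗ map δC δD) := by
  have hL : map ((tensorTensorTensorComm k C C D D).toLinearMap ∘ₗ map δC δD)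
        (TensorProduct.congr αC αD).symm.toLinearMap
        ∘ₗ (tensorTensorTensorComm k C C D D).toLinearMap ∘ₗ map δC δD
      = map (tensorTensorTensorComm k C C D D).toLinearMap LinearMap.id
        ∘ₗ (tensorTensorTensorComm k (C ⊗[k] C) C (D ⊗[k] D) D).toLinearMap
        ∘ₗ map (map δC αC.symm.toLinearMap ∘ₗ δC) (map δD αD.symm.toLinearMap ∘ₗ δD) := by
    rw [TensorProduct.congr_symm, toLinearMap_congr,
      ← LinearMap.id_comp (map αC.symm.toLinearMap _), map_comp, LinearMap.comp_assoc,
      ← LinearMap.comp_assoc _ (tensorTensorTensorComm k C C D D).toLinearMap,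
      ← tensorTensorTensorComm_comp_map, map_comp]
    simp only [LinearMap.comp_assoc]
  have hR : map (TensorProduct.congr αC αD).symm.toLinearMap
        ((tensorTensorTensorComm k C C D D).toLinearMap ∘ₗ map δC δD)
        ∘ₗ (tensorTensorTensorComm k C C D D).toLinearMap ∘ₗ map δC δD
      = map LinearMap.id (tensorTensorTensorComm k C C D D).toLinearMap
        ∘ₗ (tensorTensorTensorComm k C (C ⊗[k] C) D (D ⊗[k] D)).toLinearMap
        ∘ₗ map (map αC.symm.toLinearMap δC ∘ₗ δC) (map αD.symm.toLinearMap δD ∘ₗ δD) := by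
    rw [TensorProduct.congr_symm, toLinearMap_congr,
      ← LinearMap.id_comp (map αC.symm.toLinearMap _), map_comp, LinearMap.comp_assoc,
      ← LinearMap.comp_assoc _ (tensorTensorTensorComm k C C D D).toLinearMap,
      ← tensorTensorTensorComm_comp_map, map_comp]
    simp only [LinearMap.comp_assoc]
  unfold IsHomCoassoc at hC hD ⊢
  rw [hL, hR, ← hC, ← hD,
    map_comp (TensorProduct.assoc k C C C).toLinearMap (TensorProduct.assoc k D D D).toLinearMap]
  simp only [← LinearMap.comp_assoc]
  congr 1
  simpa only [LinearMap.comp_assoc] using assoc_comp_map_tensorTensorTensorComm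

lemma IsHomCounit.tensor {αC : C ≃ₗ[k] C} {δC : C →ₗ[k] C ⊗[k] C} {εC : C →ₗ[k] k}
    {αD : D ≃ₗ[k] D} {δD : D →ₗ[k] D ⊗[k] D} {εD : D →ₗ[k] k}
    (hC : IsHomCounit αC δC εC) (hD : IsHomCounit αD δD εD) :
    IsHomCounit (TensorProduct.congr αC αD)
      ((tensorTensorTensorComm k C C D D).toLinearMap ∘ₗ map δC δD)
      ((TensorProduct.lid k k).toLinearMap ∘ₗ map εC εD) := by
  have hrid : (TensorProduct.rid k (C ⊗[k] D)).toLinearMap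
        ∘ₗ map LinearMap.id ((TensorProduct.lid k k).toLinearMap ∘ₗ map εC εD)
        ∘ₗ (tensorTensorTensorComm k C C D D).toLinearMap
      = map ((TensorProduct.rid k C).toLinearMap ∘ₗ map LinearMap.id εC)
          ((TensorProduct.rid k D).toLinearMap ∘ₗ map LinearMap.id εD) := by
    ext; simp [smul_tmul', mul_smul, smul_comm (εC _)]
  have hlid : (TensorProduct.lid k (C ⊗[k] D)).toLinearMap
        ∘ₗ map ((TensorProduct.lid k k).toLinearMap ∘ₗ map εC εD) LinearMap.id
        ∘ₗ (tensorTensorTensorComm k C C D D).toLinearMap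
      = map ((TensorProduct.lid k C).toLinearMap ∘ₗ map εC LinearMap.id)
          ((TensorProduct.lid k D).toLinearMap ∘ₗ map εD LinearMap.id) := by
    ext; simp [smul_tmul', mul_smul, smul_comm (εC _)]
  simp only [← LinearMap.comp_assoc] at hrid hlid
  simp only [IsHomCounit, ← LinearMap.comp_assoc, hrid, hlid, ← map_comp, TensorProduct.congr_symm,
    toLinearMap_congr]
  simp only [LinearMap.comp_assoc, hC.1, hD.1, hC.2, hD.2, and_self]

end HomCoalgebra

section Tmul2

variable {k P Q R U V W : Type*} [CommRing k]
  [AddCommGroup P] [AddCommGroup Q] [AddCommGroup R] [AddCommGroup U] [AddCommGroup V]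
  [AddCommGroup W] [Module k P] [Module k Q] [Module k R] [Module k U] [Module k V] [Module k W]
  (f : P →ₗ[k] R →ₗ[k] V) (g : Q →ₗ[k] U →ₗ[k] W)

@[simp]
lemma tmul2_tmul_tmul (p : P) (q : Q) (r : R) (u : U) :
    tmul2 f g (p ⊗ₜ q) (r ⊗ₜ u) = f p r ⊗ₜ g q u := by
  simp [tmul2]

lemma tmul2_tmul_left (p : P) (q : Q) (x : R ⊗[k] U) :
    tmul2 f g (p ⊗ₜ q) x = map (f p) (g q) x := by
  induction x using TensorProduct.induction_on with
  | zero => simp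
  | tmul r u => simp
  | add x y hx hy => simp only [map_add, hx, hy]

lemma tmul2_tmul_right (x : P ⊗[k] Q) (r : R) (u : U) :
    tmul2 f g x (r ⊗ₜ u) = map (f.flip r) (g.flip u) x := by
  induction x using TensorProduct.induction_on with
  | zero => simp
  | tmul p q => simp
  | add x y hx hy => simp only [map_add, LinearMap.add_apply, hx, hy]

lemma tmul2_map {σP : P →ₗ[k] P} {σQ : Q →ₗ[k] Q} {σR : R →ₗ[k] R} {σU : U →ₗ[k] U}
    {σV : V →ₗ[k] V} {σW : W →ₗ[k] W} (hf : ∀ p r, σV (f p r) = f (σP p) (σR r))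
    (hg : ∀ q u, σW (g q u) = g (σQ q) (σU u)) (x : P ⊗[k] Q) (y : R ⊗[k] U) :
    tmul2 f g (map σP σQ x) (map σR σU y) = map σV σW (tmul2 f g x y) := by
  induction x using TensorProduct.induction_on with
  | zero => simp
  | add x x' hx hx' => simp only [map_add, LinearMap.add_apply, hx, hx']
  | tmul p q =>
    induction y using TensorProduct.induction_on with
    | zero => simp
    | add y y' hy hy' => simp only [map_add, hy, hy']
    | tmul r u => simp [hf, hg]

end Tmul2


namespace MonHomHopf

variable {k H : Type*} [CommRing k] [AddCommGroup H] [Module k H] (A : MonHomHopf k H)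

lemma symm_alpha_mul (g h : H) : A.α.symm (A.mul g h) = A.mul (A.α.symm g) (A.α.symm h) :=
  A.α.injective (by simp [A.alpha_mul])

lemma symm_alpha_one : A.α.symm A.one = A.one :=
  A.α.injective (by simp [A.alpha_one])

lemma comul_alpha_symm (h : H) :
    A.comul (A.α.symm h) = map A.α.symm.toLinearMap A.α.symm.toLinearMap (A.comul h) := by
  conv_rhs => rw [← A.α.apply_symm_apply h, A.comul_alpha, ← LinearMap.comp_apply,
    ← map_comp]
  simp

lemma counit_alpha_symm (h : H) : A.counit (A.α.symm h) = A.counit h := by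
  simpa using (A.counit_alpha (A.α.symm h)).symm

section Convolution

variable {C : Type*} [AddCommGroup C] [Module k C]

def conv (δ : C →ₗ[k] C ⊗[k] C) (f g : C →ₗ[k] H) : C →ₗ[k] H :=
  lift A.mul ∘ₗ map f g ∘ₗ δ

def convOne (ε : C →ₗ[k] k) : C →ₗ[k] H :=
  LinearMap.toSpanSingleton k H A.one ∘ₗ ε

variable {A} {αC : C ≃ₗ[k] C} {δ : C →ₗ[k] C ⊗[k] C} {ε : C →ₗ[k] k}

lemma conv_convOne (hε : IsHomCounit αC δ ε)
    {f : C →ₗ[k] H} (hf : f ∘ₗ αC.toLinearMap = A.α.toLinearMap ∘ₗ f) :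
    A.conv δ f (A.convOne ε) = f := by
  have hmul : lift A.mul ∘ₗ map f (A.convOne ε)
      = A.α.toLinearMap ∘ₗ f ∘ₗ (TensorProduct.rid k C).toLinearMap ∘ₗ map LinearMap.id ε := by
    refine TensorProduct.ext' fun a b => ?_
    simp [convOne, A.mul_one']
  rw [conv, ← LinearMap.comp_assoc, hmul]
  simp only [LinearMap.comp_assoc, hε.1]
  rw [← LinearMap.comp_assoc, ← hf, LinearMap.comp_assoc]
  ext; simp

lemma convOne_conv (hε : IsHomCounit αC δ ε)
    {f : C →ₗ[k] H} (hf : f ∘ₗ αC.toLinearMap = A.α.toLinearMap ∘ₗ f) :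
    A.conv δ (A.convOne ε) f = f := by
  have hmul : lift A.mul ∘ₗ map (A.convOne ε) f
      = A.α.toLinearMap ∘ₗ f ∘ₗ (TensorProduct.lid k C).toLinearMap ∘ₗ map ε LinearMap.id := by
    refine TensorProduct.ext' fun a b => ?_
    simp [convOne, A.one_mul']
  rw [conv, ← LinearMap.comp_assoc, hmul]
  simp only [LinearMap.comp_assoc, hε.2]
  rw [← LinearMap.comp_assoc, ← hf, LinearMap.comp_assoc]
  ext; simp

lemma conv_assoc (hδ : IsHomCoassoc αC δ)
    {f g h : C →ₗ[k] H} (hf : f ∘ₗ αC.toLinearMap = A.α.toLinearMap ∘ₗ f)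
    (hh : h ∘ₗ αC.toLinearMap = A.α.toLinearMap ∘ₗ h) :
    A.conv δ f (A.conv δ g h) = A.conv δ (A.conv δ f g) h := by
  have hassoc : lift A.mul ∘ₗ map f (lift A.mul ∘ₗ map g h) ∘ₗ map αC.toLinearMap LinearMap.id
        ∘ₗ (TensorProduct.assoc k C C C).toLinearMap
      = lift A.mul ∘ₗ map (lift A.mul ∘ₗ map f g) h ∘ₗ map LinearMap.id αC.toLinearMap := by
    refine TensorProduct.ext_threefold fun a b c => ?_
    have hfa := LinearMap.congr_fun hf a
    have hhc := LinearMap.congr_fun hh c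
    simp only [LinearMap.comp_apply, LinearEquiv.coe_coe] at hfa hhc
    simp [hfa, hhc, A.hom_assoc]
  have hleft : map LinearMap.id δ ∘ₗ δ = map αC.toLinearMap LinearMap.id
      ∘ₗ (TensorProduct.assoc k C C C).toLinearMap ∘ₗ map δ αC.symm.toLinearMap ∘ₗ δ := by
    rw [hδ, ← LinearMap.comp_assoc, ← map_comp]
    simp
  have hright :
      map LinearMap.id αC.toLinearMap ∘ₗ map δ αC.symm.toLinearMap = map δ LinearMap.id := by
    rw [← map_comp]; simp
  calc A.conv δ f (A.conv δ g h)
      = lift A.mul ∘ₗ map f (lift A.mul ∘ₗ map g h) ∘ₗ (map LinearMap.id δ ∘ₗ δ) := by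
        have : map f (lift A.mul ∘ₗ map g h ∘ₗ δ)
            = map f (lift A.mul ∘ₗ map g h) ∘ₗ map LinearMap.id δ := by
          rw [← map_comp, LinearMap.comp_id, LinearMap.comp_assoc]
        simp only [conv, this, LinearMap.comp_assoc]
    _ = lift A.mul ∘ₗ map (lift A.mul ∘ₗ map f g) h ∘ₗ (map δ LinearMap.id ∘ₗ δ) := by
        rw [hleft, ← hright]
        simp only [← LinearMap.comp_assoc] at hassoc ⊢
        rw [hassoc]
    _ = A.conv δ (A.conv δ f g) h := by
        have : map (lift A.mul ∘ₗ map f g ∘ₗ δ) h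
            = map (lift A.mul ∘ₗ map f g) h ∘ₗ map δ LinearMap.id := by
          rw [← map_comp, LinearMap.comp_id, LinearMap.comp_assoc]
        simp only [conv, this, LinearMap.comp_assoc]

end Convolution

lemma isHomCoassoc : IsHomCoassoc A.α A.comul := LinearMap.ext A.hom_coassoc

lemma isHomCounit : IsHomCounit A.α A.comul A.counit :=
  ⟨LinearMap.ext A.counit_comul_right, LinearMap.ext A.counit_comul_left⟩

def tensorComul : H ⊗[k] H →ₗ[k] (H ⊗[k] H) ⊗[k] (H ⊗[k] H) :=
  (tensorTensorTensorComm k H H H H).toLinearMap ∘ₗ map A.comul A.comul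

def tensorCounit : H ⊗[k] H →ₗ[k] k :=
  (TensorProduct.lid k k).toLinearMap ∘ₗ map A.counit A.counit

lemma comul_comp_lift_mul :
    A.comul ∘ₗ lift A.mul = map (lift A.mul) (lift A.mul) ∘ₗ A.tensorComul :=
  TensorProduct.ext' fun g h => by simp [A.comul_mul, tmul2, tensorComul]

lemma isHomCoassoc_tensorComul : IsHomCoassoc (TensorProduct.congr A.α A.α) A.tensorComul :=
  A.isHomCoassoc.tensor A.isHomCoassoc

lemma isHomCounit_tensorComul :
    IsHomCounit (TensorProduct.congr A.α A.α) A.tensorComul A.tensorCounit :=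
  A.isHomCounit.tensor A.isHomCounit

def antipodeRevMul : H ⊗[k] H →ₗ[k] H :=
  lift ((A.mul.flip ∘ₗ A.S).compl₂ A.S)

lemma conv_antipode_comp_mul_mul :
    A.conv A.tensorComul (A.S ∘ₗ lift A.mul) (lift A.mul) = A.convOne A.tensorCounit := by
  have hsMul : lift A.mul ∘ₗ map A.S LinearMap.id ∘ₗ A.comul = A.convOne A.counit :=
    LinearMap.ext fun h => by simpa [convOne] using A.antipode_left h
  have hmap : map (A.S ∘ₗ lift A.mul) (lift A.mul)
      = map A.S LinearMap.id ∘ₗ map (lift A.mul) (lift A.mul) := by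
    rw [← map_comp, LinearMap.id_comp]
  rw [conv, hmap, LinearMap.comp_assoc, ← comul_comp_lift_mul]
  simp only [← LinearMap.comp_assoc] at hsMul ⊢
  rw [hsMul]
  exact TensorProduct.ext' fun g h => by simp [convOne, tensorCounit, A.counit_mul]

lemma conv_mul_antipodeRevMul :
    A.conv A.tensorComul (lift A.mul) A.antipodeRevMul = A.convOne A.tensorCounit := by
  set mulS : H ⊗[k] H →ₗ[k] H := lift A.mul ∘ₗ map LinearMap.id A.S
  have hmulS (h : H) : mulS (A.comul h) = A.counit h • A.one := A.antipode_right h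
  -- `F ((a ⊗ b) ⊗ (c ⊗ d)) = (a c) (S d S b)`, and the convolution at `x ⊗ y` is `F (Δx ⊗ Δy)`.
  set F := lift A.mul ∘ₗ map (lift A.mul) A.antipodeRevMul
    ∘ₗ (tensorTensorTensorComm k H H H H).toLinearMap
  have hF_tmul (a b : H) (v : H ⊗[k] H) :
      F ((a ⊗ₜ b) ⊗ₜ v)
        = A.mul (A.α a)
            (A.mul (mulS (map A.α.symm.toLinearMap A.α.symm.toLinearMap v)) (A.S b)) := by
    induction v using TensorProduct.induction_on with
    | zero => simp
    | add v w hv hw => simp only [tmul_add, map_add, hv, hw, LinearMap.add_apply]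
    | tmul c d =>
      have hc : A.mul c (A.mul (A.S (A.α.symm d)) (A.S (A.α.symm b)))
          = A.mul (A.mul (A.α.symm c) (A.S (A.α.symm d))) (A.S b) := by
        simpa [← A.S_alpha] using A.hom_assoc (A.α.symm c) (A.S (A.α.symm d)) (A.S (A.α.symm b))
      calc F ((a ⊗ₜ b) ⊗ₜ (c ⊗ₜ d))
          = A.mul (A.mul a c) (A.α (A.mul (A.S (A.α.symm d)) (A.S (A.α.symm b)))) := by
            simp [F, antipodeRevMul, A.alpha_mul, ← A.S_alpha]
        _ = A.mul (A.α a) (A.mul c (A.mul (A.S (A.α.symm d)) (A.S (A.α.symm b)))) :=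
            (A.hom_assoc _ _ _).symm
        _ = _ := by simp [hc, mulS]
  have hF_comul (u : H ⊗[k] H) (h : H) : F (u ⊗ₜ A.comul h) = A.counit h • A.α (mulS u) := by
    induction u using TensorProduct.induction_on with
    | zero => simp
    | add v w hv hw => simp only [add_tmul, map_add, hv, hw, smul_add]
    | tmul a b =>
      rw [hF_tmul, ← comul_alpha_symm, hmulS, counit_alpha_symm]
      simp [A.one_mul', mulS, A.alpha_mul]
  refine TensorProduct.ext' fun g h => ?_
  have := hF_comul (A.comul g) h
  rw [hmulS] at this
  simp [conv, tensorComul, convOne, tensorCounit, F] at this ⊢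
  rw [this, A.alpha_one, smul_smul, mul_comm]

lemma S_mul (g h : H) : A.S (A.mul g h) = A.mul (A.S h) (A.S g) := by
  have hSmul : (A.S ∘ₗ lift A.mul) ∘ₗ (TensorProduct.congr A.α A.α).toLinearMap
      = A.α.toLinearMap ∘ₗ A.S ∘ₗ lift A.mul :=
    TensorProduct.ext' fun g h => by simp [← A.alpha_mul, A.S_alpha]
  have hrev : A.antipodeRevMul ∘ₗ (TensorProduct.congr A.α A.α).toLinearMap
      = A.α.toLinearMap ∘ₗ A.antipodeRevMul :=
    TensorProduct.ext' fun g h => by simp [antipodeRevMul, ← A.alpha_mul, A.S_alpha]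
  have key : A.S ∘ₗ lift A.mul = A.antipodeRevMul := calc
    A.S ∘ₗ lift A.mul = A.conv A.tensorComul (A.S ∘ₗ lift A.mul) (A.convOne A.tensorCounit) :=
      (conv_convOne A.isHomCounit_tensorComul hSmul).symm
    _ = A.conv A.tensorComul (A.conv A.tensorComul (A.S ∘ₗ lift A.mul) (lift A.mul))
          A.antipodeRevMul := by
      rw [← conv_mul_antipodeRevMul, conv_assoc A.isHomCoassoc_tensorComul hSmul hrev]
    _ = A.antipodeRevMul := by
      rw [conv_antipode_comp_mul_mul, convOne_conv A.isHomCounit_tensorComul hrev]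
  simpa [antipodeRevMul] using LinearMap.congr_fun key (g ⊗ₜ h)

end MonHomHopf

namespace LeftCovBimod

variable {k H : Type*} [CommRing k] [AddCommGroup H] [Module k H] {A : MonHomHopf k H}
  {M : Type*} [AddCommGroup M] [Module k M] (B : LeftCovBimod A M)

lemma symm_mu_lact (h : H) (m : M) : B.μ.symm (B.lact h m) = B.lact (A.α.symm h) (B.μ.symm m) :=
  B.μ.injective (by simp [B.mu_lact])

lemma symm_mu_ract (m : M) (h : H) : B.μ.symm (B.ract m h) = B.ract (B.μ.symm m) (A.α.symm h) :=
  B.μ.injective (by simp [B.mu_ract])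

lemma map_alpha_mu_injective : Function.Injective (map A.α.toLinearMap B.μ.toLinearMap) := by
  rw [← toLinearMap_congr]
  exact (TensorProduct.congr A.α B.μ).injective

lemma rho_lact (h : H) (m : M) :
    B.rho (B.lact h m) = tmul2 A.mul B.lact (A.comul h) (B.rho m) := by
  apply B.map_alpha_mu_injective
  have hcov := B.rho_cov h A.one m
  have hone : map (A.mul.flip A.one) (B.ract.flip A.one) = map A.α.toLinearMap B.μ.toLinearMap := by
    congr 1
    · exact LinearMap.ext A.mul_one'
    · exact LinearMap.ext B.ract_one
  rw [A.alpha_one, B.ract_one, B.rho_mu, A.comul_one, tmul2_tmul_right, hone, A.comul_alpha,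
    tmul2_map _ _ A.alpha_mul B.mu_lact] at hcov
  exact hcov

lemma rho_ract (m : M) (h : H) :
    B.rho (B.ract m h) = tmul2 A.mul B.ract (B.rho m) (A.comul h) := by
  apply B.map_alpha_mu_injective
  have hcov := B.rho_cov A.one h m
  have hone : map (A.mul A.one) (B.lact A.one) = map A.α.toLinearMap B.μ.toLinearMap := by
    congr 1
    · exact LinearMap.ext A.one_mul'
    · exact LinearMap.ext B.lact_one
  rw [B.lact_one, ← B.mu_ract, B.rho_mu, A.alpha_one, A.comul_one, tmul2_tmul_left, hone] at hcov
  exact hcov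

lemma PL_apply (m : M) : B.PL m = lift (B.lact ∘ₗ A.S) (B.rho m) := rfl

lemma PL_lact (h : H) (m : M) : B.PL (B.lact h m) = A.counit h • B.μ (B.PL m) := by
  set sMul : H ⊗[k] H →ₗ[k] H := lift A.mul ∘ₗ map A.S LinearMap.id
  have htmul (u : H ⊗[k] H) (c : H) (d : M) :
      lift (B.lact ∘ₗ A.S) (tmul2 A.mul B.lact u (c ⊗ₜ d))
        = B.lact (A.α (A.S c)) (B.lact (A.α.symm (sMul u)) d) := by
    induction u using TensorProduct.induction_on with
    | zero => simp
    | add u u' hu hu' => simp only [map_add, LinearMap.add_apply, hu, hu']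
    | tmul a b =>
      have hab : B.lact (A.S a) (B.lact (A.α.symm b) (B.μ.symm d))
          = B.lact (A.α.symm (A.mul (A.S a) b)) d := by
        simpa [A.symm_alpha_mul] using B.lact_assoc (A.α.symm (A.S a)) (A.α.symm b) (B.μ.symm d)
      calc lift (B.lact ∘ₗ A.S) (tmul2 A.mul B.lact (a ⊗ₜ b) (c ⊗ₜ d))
          = B.lact (A.mul (A.S c) (A.S a)) (B.μ (B.μ.symm (B.lact b d))) := by simp [A.S_mul]
        _ = B.lact (A.α (A.S c)) (B.lact (A.S a) (B.lact (A.α.symm b) (B.μ.symm d))) := by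
          rw [← B.lact_assoc, B.symm_mu_lact]
        _ = _ := by simp [hab, sMul]
  have hcomul (v : H ⊗[k] M) :
      lift (B.lact ∘ₗ A.S) (tmul2 A.mul B.lact (A.comul h) v)
        = A.counit h • B.μ (lift (B.lact ∘ₗ A.S) v) := by
    induction v using TensorProduct.induction_on with
    | zero => simp
    | add v v' hv hv' => simp only [map_add, hv, hv', smul_add]
    | tmul c d =>
      rw [htmul, show sMul (A.comul h) = A.counit h • A.one from A.antipode_left h]
      simp [A.symm_alpha_one, B.lact_one, B.mu_lact]
  rw [PL_apply, rho_lact, hcomul, PL_apply]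

lemma adRM_zero (h : H) : B.adRM 0 h = 0 := by
  simp only [adRM, LinearMap.comp_apply]
  induction A.comul h using TensorProduct.induction_on with
  | zero => simp
  | add u u' hu hu' => simp only [map_add, hu, hu', add_zero]
  | tmul a b => simp

lemma adRM_add (x y : M) (h : H) : B.adRM (x + y) h = B.adRM x h + B.adRM y h := by
  simp only [adRM, LinearMap.comp_apply]
  induction A.comul h using TensorProduct.induction_on with
  | zero => simp
  | add u u' hu hu' =>
    rw [LinearMap.map_add, LinearMap.map_add, LinearMap.map_add, hu, hu']
    abel
  | tmul a b => simp

lemma PL_ract (m : M) (h : H) : B.PL (B.ract m h) = B.adRM (B.PL m) h := by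
  have htmul (c : H) (d : M) :
      lift (B.lact ∘ₗ A.S) (tmul2 A.mul B.ract (c ⊗ₜ d) (A.comul h))
        = B.adRM (B.lact (A.S c) d) h := by
    simp only [adRM, LinearMap.comp_apply]
    induction A.comul h using TensorProduct.induction_on with
    | zero => simp
    | add u u' hu hu' => simp only [map_add, hu, hu']
    | tmul a b =>
      have hbimod : B.lact (A.S c) (B.ract (B.μ.symm d) (A.α.symm b))
          = B.ract (B.lact (A.α.symm (A.S c)) (B.μ.symm d)) b := by
        simpa using (B.bimod (A.α.symm (A.S c)) (B.μ.symm d) (A.α.symm b)).symm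
      calc lift (B.lact ∘ₗ A.S) (tmul2 A.mul B.ract (c ⊗ₜ d) (a ⊗ₜ b))
          = B.lact (A.mul (A.S a) (A.S c)) (B.μ (B.μ.symm (B.ract d b))) := by simp [A.S_mul]
        _ = B.lact (A.α (A.S a)) (B.ract (B.lact (A.α.symm (A.S c)) (B.μ.symm d)) b) := by
          rw [← B.lact_assoc, B.symm_mu_ract, hbimod]
        _ = B.ract (B.lact (A.S a) (B.lact (A.α.symm (A.S c)) (B.μ.symm d))) (A.α b) :=
          (B.bimod _ _ _).symm
        _ = _ := by simp [B.symm_mu_lact]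
  have hsum (v : H ⊗[k] M) :
      lift (B.lact ∘ₗ A.S) (tmul2 A.mul B.ract v (A.comul h))
        = B.adRM (lift (B.lact ∘ₗ A.S) v) h := by
    induction v using TensorProduct.induction_on with
    | zero => simp [adRM_zero]
    | add v v' hv hv' => simp only [map_add, LinearMap.add_apply, hv, hv', adRM_add]
    | tmul c d => simp [htmul]
  rw [PL_apply, rho_ract, hsum, PL_apply]

end LeftCovBimod

/-- `P_L(h·m) = ε(h) μ(P_L(m))` and
`P_L(m·h) = (S(h₁) · μ⁻¹(P_L(m))) · α(h₂)` (the right adjoint Hom-action of `h` on `P_L(m)`). -/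
theorem PL_equivariance {k H : Type*} [CommRing k] [AddCommGroup H] [Module k H]
    (A : MonHomHopf k H) {M : Type*} [AddCommGroup M] [Module k M]
    (B : LeftCovBimod A M) :
    (∀ h m, B.PL (B.lact h m) = A.counit h • B.μ (B.PL m)) ∧
    (∀ m h, B.PL (B.ract m h) = B.adRM (B.PL m) h) :=
  ⟨B.PL_lact, B.PL_ract⟩
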